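/- The antiautomorphism ζ of the free algebra V on x,y that swaps x and y (reversing words and exchanging letters) is an antiautomorphism of the q-shuffle algebra: ζ(u ⋆ v) = ζ(v) ⋆ ζ(u) for all u, v ∈ V. -/

import Mathlib

open scoped Classical

inductive Letter | x | y
deriving DecidableEq

instance : Fintype Letter :=
  ⟨{Letter.x, Letter.y}, fun a => by cases a <;> simp⟩

/-- x ↦ 1, y ↦ -1 -/
def bar : Letter → ℤ
  | .x => 1
  | .y => -1

/-- σ swaps the letters x and y. -/
def sigma : Letter → Letter
  | .x => .y
  | .y => .x

/-- the pairing ⟨u,v⟩ : 2 if u = v, -2 otherwise. -/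
def pair : Letter → Letter → ℤ := fun u v => if u = v then 2 else -2

noncomputable section

/-- The free associative algebra on the two letters x, y (with its word basis). -/
abbrev V (F : Type*) [Field F] := MonoidAlgebra F (FreeMonoid Letter)

variable {F : Type*} [Field F]

/-- the basis word of V corresponding to a list of letters -/
def wd (w : List Letter) : V F := MonoidAlgebra.single (FreeMonoid.ofList w) 1

/-- the q-shuffle product of two words, by the left recursion -/
def shuffleWord (q : F) : List Letter → List Letter → V F
  | [], v => wd v
  | u1 :: ut, [] => wd (u1 :: ut)
  | u1 :: ut, v1 :: vt =>
      wd [u1] * shuffleWord q ut (v1 :: vt)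
      + q ^ (((u1 :: ut).map (fun a => pair a v1)).sum) •
          (wd [v1] * shuffleWord q (u1 :: ut) vt)
termination_by u v => u.length + v.length

/-- the q-shuffle product on V, extended bilinearly -/
def shuffle (q : F) (a b : V F) : V F :=
  a.coeff.sum fun u cu => b.coeff.sum fun v cv =>
    (cu * cv) • shuffleWord q (FreeMonoid.toList u) (FreeMonoid.toList v)

/-- the quantum integer [m]_q -/
def qint (q : F) (m : ℤ) : F := (q ^ m - q ^ (-m)) / (q - q⁻¹)

/-- the quantum factorial [m]_q! -/
def qfac (q : F) (m : ℤ) : F := ∏ j ∈ Finset.range m.toNat, qint q ((j : ℤ) + 1)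

/-- e_i = ā_1 + ⋯ + ā_i, the i-th elevation of the word w -/
def esum (w : List Letter) (i : ℕ) : ℤ := ((w.take i).map bar).sum

/-- A word is Catalan when all partial sums of bar are nonnegative and the total is zero. -/
def IsCatalan (w : List Letter) : Prop :=
  (∀ i, i ≤ w.length → 0 ≤ esum w i) ∧ esum w w.length = 0

/-- the coefficient C(w) = ∏_{i=0}^{2n} [1 + e_i]_q -/
def Ccoef (q : F) (w : List Letter) : F :=
  ∏ i ∈ Finset.range (w.length + 1), qint q (1 + esum w i)

/-- the n-th Catalan element C_n = ∑_{w ∈ Cat_n} C(w) w  -/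
def catalanElt (q : F) (n : ℕ) : V F :=
  ∑ f : Fin (2 * n) → Letter,
    if IsCatalan (List.ofFn f) then Ccoef q (List.ofFn f) • wd (List.ofFn f) else 0

/-- the antiautomorphism ζ : reverse the word and swap x,y, extended linearly -/
def zeta (a : V F) : V F :=
  a.coeff.sum fun w c =>
    MonoidAlgebra.single (FreeMonoid.ofList (((FreeMonoid.toList w).map sigma).reverse)) c

/-- The profile of a word: delete from the elevation sequence every interior e_i
    such that e_{i+1}-e_i and e_i-e_{i-1} have the same sign. -/
def profile (w : List Letter) : List ℤ :=
  (List.range (w.length + 1)).filterMap fun i =>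
    if i = 0 ∨ i = w.length then some (esum w i)
    else if 0 < (esum w (i + 1) - esum w i) * (esum w i - esum w (i - 1)) then none
    else some (esum w i)

/-- The list (ℓ_0, h_1, ℓ_1, h_2, …, h_r, ℓ_r). -/
def P (r : ℕ) (ℓ h : ℕ → ℤ) : List ℤ :=
  List.ofFn fun i : Fin (2 * r + 1) =>
    if i.val % 2 = 0 then ℓ (i.val / 2) else h ((i.val + 1) / 2)

/-- the word x^{h_1} y^{h_1-ℓ_1} x^{h_2-ℓ_1} y^{h_2-ℓ_2} ⋯ x^{h_r-ℓ_{r-1}} y^{h_r} -/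
def explicitWord (r : ℕ) (ℓ h : ℕ → ℤ) : List Letter :=
  (List.range r).flatMap fun i =>
    List.replicate (h (i + 1) - ℓ i).toNat Letter.x ++
      List.replicate (h (i + 1) - ℓ (i + 1)).toNat Letter.y

/-- C(ℓ_0,h_1,…,h_r,ℓ_r), the ratio of q-factorials attached to a profile. -/
def Cprof (q : F) (r : ℕ) (ℓ h : ℕ → ℤ) : F :=
  (∏ i ∈ Finset.Icc 1 r, qfac q (h i) * qfac q (h i + 1)) /
    (∏ i ∈ Finset.range (r + 1), qfac q (ℓ i) * qfac q (ℓ i + 1))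

end

/-! The q-shuffle product also obeys the mirror image of its defining recursion,
`(u a) ⋆ (v b) = q^{∑_i ⟨(v b)_i, a⟩} (u ⋆ v b) a + (u a ⋆ v) b`,
which follows from the left recursion by induction on the lengths.
Since `⟨σ a, σ b⟩ = ⟨a, b⟩`, applying `ζ` to the left recursion for `u ⋆ v`
produces exactly the right recursion for `ζ v ⋆ ζ u`, so the identity holds
on words by induction, and on all of `V` by bilinearity. -/

namespace QShuffle

variable {F : Type*} [Field F]

lemma sigma_sigma (a : Letter) : sigma (sigma a) = a := by
  cases a <;> rfl

lemma pair_comm (a b : Letter) : pair a b = pair b a := by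
  cases a <;> cases b <;> rfl

lemma pair_sigma_sigma (a b : Letter) : pair (sigma a) (sigma b) = pair a b := by
  cases a <;> cases b <;> rfl

def pairSum (w : List Letter) (b : Letter) : ℤ := (w.map (pair · b)).sum

@[simp]
lemma pairSum_nil (b : Letter) : pairSum [] b = 0 := rfl

@[simp]
lemma pairSum_cons (a : Letter) (w : List Letter) (b : Letter) :
    pairSum (a :: w) b = pair a b + pairSum w b := by
  simp [pairSum]

@[simp]
lemma pairSum_append (w₁ w₂ : List Letter) (b : Letter) :
    pairSum (w₁ ++ w₂) b = pairSum w₁ b + pairSum w₂ b := by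
  simp [pairSum]

def zetaList (w : List Letter) : List Letter := (w.map sigma).reverse

@[simp]
lemma zetaList_nil : zetaList [] = [] := rfl

lemma zetaList_cons (a : Letter) (w : List Letter) :
    zetaList (a :: w) = zetaList w ++ [sigma a] := by
  simp [zetaList]

lemma zetaList_zetaList (w : List Letter) : zetaList (zetaList w) = w := by
  simp [zetaList, Function.comp_def, sigma_sigma]

lemma zetaList_append (u v : List Letter) : zetaList (u ++ v) = zetaList v ++ zetaList u := by
  simp [zetaList]

lemma pairSum_zetaList (w : List Letter) (b : Letter) :
    pairSum (zetaList w) (sigma b) = pairSum w b := by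
  induction w with
  | nil => rfl
  | cons a w ih => simp [zetaList_cons, ih, pair_sigma_sigma, add_comm]

lemma wd_mul_wd (u v : List Letter) : (wd u : V F) * wd v = wd (u ++ v) := by
  rw [wd, wd, MonoidAlgebra.single_mul_single, one_mul]
  rfl

lemma shuffleWord_nil_left (q : F) (v : List Letter) : shuffleWord q [] v = wd v := by
  rw [shuffleWord]

lemma shuffleWord_nil_right (q : F) (u : List Letter) : shuffleWord q u [] = wd u := by
  cases u <;> rw [shuffleWord]

lemma shuffleWord_cons_cons (q : F) (a : Letter) (u : List Letter) (b : Letter)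
    (v : List Letter) :
    shuffleWord q (a :: u) (b :: v) =
      wd [a] * shuffleWord q u (b :: v)
        + q ^ pairSum (a :: u) b • (wd [b] * shuffleWord q (a :: u) v) := by
  rw [shuffleWord]
  rfl

lemma shuffleWord_singleton_singleton (q : F) (a b : Letter) :
    shuffleWord q [a] [b] = wd [a, b] + q ^ pair a b • wd [b, a] := by
  simp [shuffleWord_cons_cons, shuffleWord_nil_left, shuffleWord_nil_right, wd_mul_wd]

lemma shuffleWord_append_singleton (q : F) (hq0 : q ≠ 0) (u : List Letter) (a : Letter)
    (v : List Letter) (b : Letter) :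
    shuffleWord q (u ++ [a]) (v ++ [b]) =
      q ^ pairSum (v ++ [b]) a • (shuffleWord q u (v ++ [b]) * wd [a])
        + shuffleWord q (u ++ [a]) v * wd [b] := by
  induction u generalizing v with
  | nil =>
    induction v with
    | nil =>
      simp [shuffleWord_singleton_singleton, shuffleWord_nil_left, shuffleWord_nil_right, wd_mul_wd,
        pair_comm b a, add_comm]
    | cons v₁ v ihv =>
      simp only [List.nil_append, List.cons_append] at ihv ⊢
      rw [shuffleWord_cons_cons, ihv, shuffleWord_cons_cons]
      simp only [shuffleWord_nil_left, pairSum_cons, pairSum_append, pairSum_nil, pair_comm v₁ a,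
        zpow_add₀ hq0, smul_add, smul_smul, mul_add, add_mul, smul_mul_assoc, mul_smul_comm,
        mul_assoc, wd_mul_wd, List.cons_append, List.nil_append, add_zero]
      module
  | cons u₁ u ihu =>
    induction v with
    | nil =>
      have ihu := ihu []
      simp only [List.nil_append, List.cons_append] at ihu ⊢
      rw [shuffleWord_cons_cons, ihu, shuffleWord_cons_cons]
      simp only [shuffleWord_nil_right, pairSum_cons, pairSum_append, pairSum_nil, pair_comm b a,
        zpow_add₀ hq0, smul_add, smul_smul, mul_add, add_mul, smul_mul_assoc, mul_smul_comm,
        mul_assoc, wd_mul_wd, List.cons_append, List.nil_append, add_zero]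
      module
    | cons v₁ v ihv =>
      have ihu := ihu (v₁ :: v)
      simp only [List.cons_append] at ihu ihv ⊢
      rw [shuffleWord_cons_cons, ihu, ihv, shuffleWord_cons_cons, shuffleWord_cons_cons]
      simp only [pairSum_cons, pairSum_append, pairSum_nil, pair_comm v₁ a, pair_comm b a,
        zpow_add₀ hq0, smul_add, smul_smul, mul_add, add_mul, smul_mul_assoc, mul_smul_comm,
        mul_assoc, add_zero]
      module

def zetaWord (w : FreeMonoid Letter) : FreeMonoid Letter :=
  FreeMonoid.ofList (zetaList w.toList)

lemma zetaWord_injective : Function.Injective zetaWord :=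
  Function.Involutive.injective fun w => by simp [zetaWord, zetaList_zetaList]

lemma zetaWord_mul (u v : FreeMonoid Letter) : zetaWord (u * v) = zetaWord v * zetaWord u := by
  simp [zetaWord, zetaList_append]

lemma zeta_eq_mapDomainLinearMap (a : V F) :
    zeta a = MonoidAlgebra.mapDomainLinearMap F F zetaWord a := by
  apply MonoidAlgebra.coeff_injective
  rw [zeta, MonoidAlgebra.coeff_finsuppSum, MonoidAlgebra.coeff_mapDomainLinearMap]
  rfl

lemma zeta_add (a b : V F) : zeta (a + b) = zeta a + zeta b := by
  simp only [zeta_eq_mapDomainLinearMap, map_add]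

lemma zeta_smul (c : F) (a : V F) : zeta (c • a) = c • zeta a := by
  simp only [zeta_eq_mapDomainLinearMap, map_smul]

lemma zeta_wd (w : List Letter) : zeta (wd w : V F) = wd (zetaList w) := by
  rw [zeta_eq_mapDomainLinearMap, wd, MonoidAlgebra.mapDomainLinearMap_single]
  rfl

lemma zeta_mul (a b : V F) : zeta (a * b) = zeta b * zeta a := by
  simp only [zeta_eq_mapDomainLinearMap]
  induction a using MonoidAlgebra.induction_linear with
  | zero => simp
  | add a₁ a₂ h₁ h₂ => simp only [add_mul, mul_add, map_add, h₁, h₂]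
  | single u c =>
    induction b using MonoidAlgebra.induction_linear with
    | zero => simp
    | add b₁ b₂ h₁ h₂ => simp only [add_mul, mul_add, map_add, h₁, h₂]
    | single v d =>
      simp only [MonoidAlgebra.single_mul_single, MonoidAlgebra.mapDomainLinearMap_single,
        zetaWord_mul, mul_comm c d]

lemma zeta_shuffleWord (q : F) (hq0 : q ≠ 0) (u v : List Letter) :
    zeta (shuffleWord q u v) = shuffleWord q (zetaList v) (zetaList u) := by
  induction u generalizing v with
  | nil => simp [shuffleWord_nil_left, shuffleWord_nil_right, zeta_wd]
  | cons a u ihu =>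
    induction v with
    | nil => simp [shuffleWord_nil_left, shuffleWord_nil_right, zeta_wd]
    | cons b v ihv =>
      rw [zetaList_cons b v, zetaList_cons a u, shuffleWord_append_singleton q hq0,
        shuffleWord_cons_cons, zeta_add, zeta_smul, zeta_mul, zeta_mul, ihu, ihv, zeta_wd, zeta_wd,
        zetaList_cons b v, ← zetaList_cons a u, pairSum_zetaList, add_comm]
      rfl

lemma shuffle_mapDomainLinearMap (q : F) {f : FreeMonoid Letter → FreeMonoid Letter}
    (hf : Function.Injective f) (a b : V F) :
    shuffle q (MonoidAlgebra.mapDomainLinearMap F F f a)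
        (MonoidAlgebra.mapDomainLinearMap F F f b) =
      a.coeff.sum fun u cu => b.coeff.sum fun v cv =>
        (cu * cv) • shuffleWord q (f u).toList (f v).toList := by
  simp only [shuffle, MonoidAlgebra.coeff_mapDomainLinearMap, Finsupp.sum_mapDomain_index_inj hf]

lemma zeta_shuffle (q : F) (hq0 : q ≠ 0) (a b : V F) :
    zeta (shuffle q a b) =
      a.coeff.sum fun u cu => b.coeff.sum fun v cv =>
        (cu * cv) • shuffleWord q (zetaWord v).toList (zetaWord u).toList := by
  simp only [shuffle, zeta_eq_mapDomainLinearMap, map_finsuppSum, map_smul]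
  simp only [← zeta_eq_mapDomainLinearMap, zeta_shuffleWord q hq0]
  rfl

end QShuffle

theorem stmt8 {F : Type*} [Field F] (q : F) (hq0 : q ≠ 0)
    (a b : V F) :
    zeta (shuffle q a b) = shuffle q (zeta b) (zeta a) := by
  rw [QShuffle.zeta_shuffle q hq0, QShuffle.zeta_eq_mapDomainLinearMap,
    QShuffle.zeta_eq_mapDomainLinearMap,
    QShuffle.shuffle_mapDomainLinearMap q QShuffle.zetaWord_injective, Finsupp.sum_comm]
  simp only [mul_comm]
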